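/- arXiv:math/9505208 — 2 statements merged into one kernel-verified Lean document; each statement's English description precedes it below -/
import Mathlib

section
/- In the free product with amalgamation G = A *_C B, a word x₁x₂⋯xₙ (with each xᵢ a generator from (A ∪ B) \ {1}) is reduced (i.e., n = 1, or the letters alternate between A \ C and B \ C) if and only if it is a geodesic word for the element it represents, with respect to the generating set (A ∪ B) \ {1}. -/
open Monoid

universe u

/-- The two-element family of groups consisting of `A` (at `true`) and `B` (at `false`). -/
def Fam (A B : Type u) : Bool → Type u
  | true => A
  | false => B

instance famGroup {A B : Type u} [Group A] [Group B] : ∀ i, Group (Fam A B i)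
  | true => ‹Group A›
  | false => ‹Group B›

/-- The family of embeddings of `C` into `A` and `B`. -/
def famIncl {A B C : Type u} [Group A] [Group B] [Group C]
    (ιA : C →* A) (ιB : C →* B) : ∀ i, C →* Fam A B i
  | true => ιA
  | false => ιB

/-- The amalgamated free product `G = A *_C B`, as the pushout of `ιA : C →* A`
and `ιB : C →* B`. -/
abbrev Amalgam {A B C : Type u} [Group A] [Group B] [Group C]
    (ιA : C →* A) (ιB : C →* B) : Type u :=
  Monoid.PushoutI (famIncl ιA ιB)

/-- The element of `A *_C B` represented by a word whose letters are elements of `A` or `B`. -/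
def evalW {A B C : Type u} [Group A] [Group B] [Group C]
    (ιA : C →* A) (ιB : C →* B) (l : List (Σ i, Fam A B i)) : Amalgam ιA ιB :=
  (l.map (fun p => PushoutI.of (φ := famIncl ιA ιB) p.1 p.2)).prod

/-- A word over `(A ∪ B) \ {1}` is reduced if it has length one (and its letter is not the
identity), or its letters alternate between `A \ C` and `B \ C`. -/
def ReducedW {A B C : Type u} [Group A] [Group B] [Group C]
    (ιA : C →* A) (ιB : C →* B) (l : List (Σ i, Fam A B i)) : Prop :=
  (l.length = 1 ∧ ∀ p ∈ l, p.2 ≠ 1) ∨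
  (2 ≤ l.length ∧ (∀ p ∈ l, p.2 ∉ Set.range (famIncl ιA ιB p.1)) ∧
    l.Chain' (fun p q => p.1 ≠ q.1))

/-- Word length in `A *_C B` with respect to the generating set `(A ∪ B) \ {1}`. -/
noncomputable def wlen {A B C : Type u} [Group A] [Group B] [Group C]
    (ιA : C →* A) (ιB : C →* B) (g : Amalgam ιA ιB) : ℕ :=
  sInf {k | ∃ l : List (Σ i, Fam A B i),
    (∀ p ∈ l, p.2 ≠ 1) ∧ evalW ιA ιB l = g ∧ l.length = k}

section Aux

variable {A B C : Type u} [Group A] [Group B] [Group C] {ιA : C →* A} {ιB : C →* B}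

lemma evalW_nil : evalW ιA ιB [] = 1 := rfl

lemma evalW_cons (p : Σ i, Fam A B i) (l : List (Σ i, Fam A B i)) :
    evalW ιA ιB (p :: l) = PushoutI.of (φ := famIncl ιA ιB) p.1 p.2 * evalW ιA ιB l := by
  simp [evalW]

/-- Strongly reduced words: all letters outside the amalgamated subgroup, alternating. -/
def StrongW (ιA : C →* A) (ιB : C →* B) (l : List (Σ i, Fam A B i)) : Prop :=
  (∀ p ∈ l, p.2 ∉ Set.range (famIncl ιA ιB p.1)) ∧ l.Chain' (fun p q => p.1 ≠ q.1)

/-- A strongly reduced word as a `CoprodI.Word`. -/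
def toW (l : List (Σ i, Fam A B i)) (h : StrongW ιA ιB l) : Monoid.CoprodI.Word (Fam A B) :=
  ⟨l, fun p hp hp1 => h.1 p hp ⟨1, by rw [map_one, hp1]⟩, h.2⟩

lemma reduced_toW (l : List (Σ i, Fam A B i)) (h : StrongW ιA ιB l) :
    PushoutI.Reduced (famIncl ιA ιB) (toW l h) := by
  intro p hp hr
  exact h.1 p hp (MonoidHom.mem_range.mp hr)

lemma evalW_toW (l : List (Σ i, Fam A B i)) (h : StrongW ιA ιB l) :
    PushoutI.ofCoprodI ((toW l h).prod) = evalW ιA ιB l := by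
  show PushoutI.ofCoprodI ((l.map fun p => CoprodI.of p.2).prod) = _
  rw [map_list_prod, List.map_map, evalW]
  exact congrArg List.prod (List.map_congr_left fun p _ => PushoutI.ofCoprodI_of p.1 p.2)

lemma strong_len (hinj : ∀ i, Function.Injective (famIncl ιA ιB i))
    {l1 l2 : List (Σ i, Fam A B i)} (h1 : StrongW ιA ιB l1) (h2 : StrongW ιA ιB l2)
    (he : evalW ιA ιB l1 = evalW ιA ιB l2) : l1.length = l2.length := by
  obtain ⟨d⟩ := PushoutI.NormalWord.transversal_nonempty (famIncl ιA ιB) hinj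
  obtain ⟨w1, hw1p, hw1m⟩ := (reduced_toW l1 h1).exists_normalWord_prod_eq d
  obtain ⟨w2, hw2p, hw2m⟩ := (reduced_toW l2 h2).exists_normalWord_prod_eq d
  have hw : w1 = w2 := PushoutI.NormalWord.prod_injective
    (by rw [hw1p, hw2p, evalW_toW, evalW_toW, he])
  have e1 : (w1.toList.map Sigma.fst).length = l1.length := by rw [hw1m]; simp [toW]
  have e2 : (w2.toList.map Sigma.fst).length = l2.length := by rw [hw2m]; simp [toW]
  rw [← e1, ← e2, hw]

lemma strong_eval_not_base (hinj : ∀ i, Function.Injective (famIncl ιA ιB i))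
    {l : List (Σ i, Fam A B i)} (h : StrongW ιA ιB l) (hne : l ≠ []) :
    evalW ιA ιB l ∉ (PushoutI.base (famIncl ιA ιB)).range := by
  intro hmem
  have := (reduced_toW l h).eq_empty_of_mem_range hinj (by rw [evalW_toW]; exact hmem)
  exact hne (congrArg CoprodI.Word.toList this)

lemma strong_eval_ne_one (hinj : ∀ i, Function.Injective (famIncl ιA ιB i))
    {l : List (Σ i, Fam A B i)} (h : StrongW ιA ιB l) (hne : l ≠ []) :
    evalW ιA ιB l ≠ 1 := by
  intro h1
  exact strong_eval_not_base hinj h hne (by rw [h1]; exact one_mem _)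

lemma reducedW_eval_ne_one (hinj : ∀ i, Function.Injective (famIncl ιA ιB i))
    {l : List (Σ i, Fam A B i)} (h : ReducedW ιA ιB l) (hl : ∀ p ∈ l, p.2 ≠ 1) :
    evalW ιA ιB l ≠ 1 := by
  rcases h with ⟨hlen, h1⟩ | ⟨hlen, hr, hc⟩
  · obtain ⟨p, rfl⟩ : ∃ p, l = [p] := by
      match l, hlen with
      | [p], _ => exact ⟨p, rfl⟩
    by_cases hp : p.2 ∈ Set.range (famIncl ιA ιB p.1)
    · obtain ⟨c, hc⟩ := hp
      have heq : evalW ιA ιB [p] = PushoutI.base (famIncl ιA ιB) c := by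
        rw [evalW_cons, evalW_nil, mul_one, ← hc, PushoutI.of_apply_eq_base]
      rw [heq]
      intro hone
      have hc1 : c = 1 := PushoutI.base_injective hinj (by rw [hone, map_one])
      exact h1 p (by simp) (by rw [← hc, hc1, map_one])
    · exact strong_eval_ne_one hinj
        ⟨fun q hq => by rw [List.mem_singleton] at hq; subst hq; exact hp,
          List.isChain_singleton _⟩ (by simp)
  · exact strong_eval_ne_one hinj ⟨hr, hc⟩ (by rintro rfl; simp at hlen)

lemma step : ∀ (l : List (Σ i, Fam A B i)), l ≠ [] → (∀ p ∈ l, p.2 ≠ 1) →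
    ¬ ReducedW ιA ιB l →
    ∃ l', (∀ p ∈ l', p.2 ≠ 1) ∧ evalW ιA ιB l' = evalW ιA ιB l ∧ l'.length < l.length := by
  intro l
  induction l with
  | nil => intro h; exact absurd rfl h
  | cons x t ih =>
    intro _ hl hnr
    match t, ih with
    | [], _ => exact absurd (Or.inl ⟨rfl, hl⟩) hnr
    | y :: t', ih =>
      obtain ⟨i, a⟩ := x
      obtain ⟨j, b⟩ := y
      by_cases hij : i = j
      · subst hij
        by_cases hab : a * b = 1
        · refine ⟨t', fun p hp => hl p (by simp [hp]), ?_, by simp only [List.length_cons]; omega⟩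
          rw [evalW_cons, evalW_cons, ← mul_assoc, ← map_mul, hab, map_one, one_mul]
        · refine ⟨⟨i, a * b⟩ :: t', ?_, ?_, by simp only [List.length_cons]; omega⟩
          · intro p hp
            rcases List.mem_cons.mp hp with rfl | hp
            · exact hab
            · exact hl p (by simp [hp])
          · rw [evalW_cons, evalW_cons, evalW_cons, ← mul_assoc, ← map_mul]
      · by_cases hra : a ∈ Set.range (famIncl ιA ιB i)
        · obtain ⟨c, hc⟩ := hra
          by_cases hcb : (famIncl ιA ιB j) c * b = 1
          · refine ⟨t', fun p hp => hl p (by simp [hp]), ?_, by simp only [List.length_cons]; omega⟩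
            rw [evalW_cons, evalW_cons, ← mul_assoc, ← hc, PushoutI.of_apply_eq_base,
              ← PushoutI.of_apply_eq_base (famIncl ιA ιB) j, ← map_mul, hcb, map_one, one_mul]
          · refine ⟨⟨j, (famIncl ιA ιB j) c * b⟩ :: t', ?_, ?_, by simp only [List.length_cons]; omega⟩
            · intro p hp
              rcases List.mem_cons.mp hp with rfl | hp
              · exact hcb
              · exact hl p (by simp [hp])
            · rw [evalW_cons, evalW_cons, evalW_cons, ← mul_assoc, ← hc,
                PushoutI.of_apply_eq_base, ← PushoutI.of_apply_eq_base (famIncl ιA ιB) j, ← map_mul]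
        · by_cases hrb : b ∈ Set.range (famIncl ιA ιB j)
          · obtain ⟨c, hc⟩ := hrb
            have hne1 : a * (famIncl ιA ιB i) c ≠ 1 := by
              intro h
              exact hra ⟨c⁻¹, by rw [map_inv]; exact (eq_inv_of_mul_eq_one_left h).symm⟩
            refine ⟨⟨i, a * (famIncl ιA ιB i) c⟩ :: t', ?_, ?_, by simp only [List.length_cons]; omega⟩
            · intro p hp
              rcases List.mem_cons.mp hp with rfl | hp
              · exact hne1
              · exact hl p (by simp [hp])
            · rw [evalW_cons, evalW_cons, evalW_cons, ← hc, ← mul_assoc,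
                PushoutI.of_apply_eq_base, ← PushoutI.of_apply_eq_base (famIncl ιA ιB) i, map_mul]
          · rcases eq_or_ne t' [] with rfl | ht'
            · refine absurd (Or.inr ⟨by simp, ?_, ?_⟩) hnr
              · intro p hp
                rcases List.mem_cons.mp hp with rfl | hp
                · exact hra
                · rw [List.mem_singleton] at hp; subst hp; exact hrb
              · exact List.isChain_cons_cons.mpr ⟨hij, List.isChain_singleton _⟩
            · have hnr2 : ¬ ReducedW ιA ιB (⟨j, b⟩ :: t') := by
                intro hR2
                apply hnr
                rcases hR2 with ⟨hlen2, _⟩ | ⟨hlen2, hr2, hc2⟩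
                · exact absurd (List.length_eq_zero_iff.mp (by simpa using hlen2)) ht'
                · refine Or.inr ⟨by simp only [List.length_cons]; omega, ?_, List.isChain_cons_cons.mpr ⟨hij, hc2⟩⟩
                  intro p hp
                  rcases List.mem_cons.mp hp with rfl | hp
                  · exact hra
                  · exact hr2 p hp
              obtain ⟨l'', h1'', h2'', h3''⟩ :=
                ih (List.cons_ne_nil _ _) (fun p hp => hl p (List.mem_cons_of_mem _ hp)) hnr2
              refine ⟨⟨i, a⟩ :: l'', ?_, ?_, by simpa using Nat.succ_lt_succ h3''⟩
              · intro p hp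
                rcases List.mem_cons.mp hp with rfl | hp
                · exact hl _ (by simp)
                · exact h1'' p hp
              · rw [evalW_cons, evalW_cons, h2'']

lemma le_length (hinj : ∀ i, Function.Injective (famIncl ιA ιB i))
    {l : List (Σ i, Fam A B i)} (hR : ReducedW ιA ιB l) (hl : ∀ p ∈ l, p.2 ≠ 1) :
    ∀ n (l2 : List (Σ i, Fam A B i)), l2.length = n → (∀ p ∈ l2, p.2 ≠ 1) →
      evalW ιA ιB l2 = evalW ιA ιB l → l.length ≤ l2.length := by
  intro n
  induction n using Nat.strong_induction_on with
  | _ n ihn =>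
    intro l2 hlen hl2 he
    rcases eq_or_ne l2 [] with rfl | hne2
    · exact absurd he.symm (by simpa [evalW_nil] using reducedW_eval_ne_one hinj hR hl)
    by_cases hR2 : ReducedW ιA ιB l2
    · rcases hR with ⟨hlen1, _⟩ | ⟨hlen1, hr1, hc1⟩
      · rw [hlen1]
        exact Nat.one_le_iff_ne_zero.mpr (by simpa using hne2)
      · have hS1 : StrongW ιA ιB l := ⟨hr1, hc1⟩
        have hlne : l ≠ [] := by rintro rfl; simp at hlen1
        rcases hR2 with ⟨hlen2, _⟩ | ⟨_, hr2, hc2⟩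
        · obtain ⟨p, rfl⟩ : ∃ p, l2 = [p] := by
            match l2, hlen2 with
            | [p], _ => exact ⟨p, rfl⟩
          by_cases hp : p.2 ∈ Set.range (famIncl ιA ιB p.1)
          · exfalso
            obtain ⟨c, hc⟩ := hp
            refine strong_eval_not_base hinj hS1 hlne ⟨c, ?_⟩
            rw [← he, evalW_cons, evalW_nil, mul_one, ← hc, PushoutI.of_apply_eq_base]
          · have hS2 : StrongW ιA ιB [p] :=
              ⟨fun q hq => by rw [List.mem_singleton] at hq; subst hq; exact hp,
                List.isChain_singleton _⟩
            exact le_of_eq (strong_len hinj hS1 hS2 he.symm)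
        · exact le_of_eq (strong_len hinj hS1 ⟨hr2, hc2⟩ he.symm)
    · obtain ⟨l', hl', he', hlt⟩ := step l2 hne2 hl2 hR2
      calc l.length ≤ l'.length :=
            ihn l'.length (by omega) l' rfl hl' (he'.trans he)
        _ ≤ l2.length := le_of_lt hlt

end Aux

/-- In the amalgamated free product `G = A *_C B` (with `C` embedded in `A` and `B`,
`|A/C| ≥ 2` and `|B/C| ≥ 2`), a nonempty word over the generating set `(A ∪ B) \ {1}`
is reduced if and only if it is a geodesic word for the element it represents. -/
theorem reduced_iff_geodesic {A B C : Type u} [Group A] [Group B] [Group C]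
    (ιA : C →* A) (ιB : C →* B)
    (hιA : Function.Injective ιA) (hιB : Function.Injective ιB)
    (hA : ∃ a : A, a ∉ Set.range ιA) (hB : ∃ b : B, b ∉ Set.range ιB)
    (l : List (Σ i, Fam A B i)) (hne : l ≠ []) (hl : ∀ p ∈ l, p.2 ≠ 1) :
    ReducedW ιA ιB l ↔ l.length = wlen ιA ιB (evalW ιA ιB l) := by
  have hinj : ∀ i, Function.Injective (famIncl ιA ιB i) := fun i => by
    cases i
    exacts [hιB, hιA]
  constructor
  · intro hR
    refine le_antisymm ?_ (Nat.sInf_le ⟨l, hl, rfl, rfl⟩)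
    refine le_csInf ⟨l.length, l, hl, rfl, rfl⟩ ?_
    rintro k ⟨l2, hl2, he2, rfl⟩
    exact le_length hinj hR hl l2.length l2 rfl hl2 he2
  · intro hgeo
    by_contra hnr
    obtain ⟨l', hl', he', hlt⟩ := step l hne hl hnr
    have hle : wlen ιA ιB (evalW ιA ιB l) ≤ l'.length := Nat.sInf_le ⟨l', hl', he', rfl⟩
    omega
end

section
/- Let G = A*_C φ be an HNN extension with generating set S = {t, t⁻¹} ∪ A \ {1}. Let w = t^{n₁} a₁ t^{n₂} a₂ ⋯ t^{n_I} a_I with aᵢ ∈ A\{1}, nᵢ ≠ 0, satisfying: n₁, n₃, … > 0; n₂, n₄, … < 0; a₁, a₃, … ∉ C; a₂, a₄, … ∉ φ(C). Then w is a geodesic word: the word length of the element it represents equals Σᵢ |nᵢ| + I. -/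
open HNNExtension

/-- The generating set `S = {t, t⁻¹} ∪ (A \ {1})` of the HNN extension. -/
def hnnGenSet {H : Type*} [Group H] (C C' : Subgroup H) (φ : C ≃* C') :
    Set (HNNExtension H C C' φ) :=
  {HNNExtension.t, HNNExtension.t⁻¹} ∪ (HNNExtension.of '' {x : H | x ≠ 1})

/-- Word length of `g` with respect to the generating set `S = {t, t⁻¹} ∪ (A \ {1})`. -/
noncomputable def hnnWordLength {H : Type*} [Group H] (C C' : Subgroup H) (φ : C ≃* C')
    (g : HNNExtension H C C' φ) : ℕ :=
  sInf {k | ∃ l : List (HNNExtension H C C' φ),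
    (∀ x ∈ l, x ∈ hnnGenSet C C' φ) ∧ l.prod = g ∧ l.length = k}

/-!
A word in the generators can be read from right to left into a reduced word (one with no
pinch `t ^ u * g * t ^ (-u)`, `g ∈ toSubgroup A B u`) whose letter-by-letter spelling is no
longer than the word. By Britton's lemma all reduced words of one element share the sequence
of `t`-exponents, here `Σ |nᵢ|` signs in `I` runs. In a reduced word the letter closing a run
is not in the corresponding subgroup, hence nontrivial. The final letter is nontrivial too:
otherwise multiplying by `t ^ (-u)` would shorten that reduced word but lengthen the alternating
one, which stays reduced because `a_I ∉ toSubgroup A B u`. So every spelling has at least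
`Σ |nᵢ| + I` generators, and `w` itself has exactly that many.
-/

namespace List

variable {α β : Type*} [DecidableEq α]

theorem destutter_ne_cons_cons (a b : α) (l : List α) :
    (a :: b :: l).destutter (· ≠ ·) =
      if a = b then (b :: l).destutter (· ≠ ·) else a :: (b :: l).destutter (· ≠ ·) := by
  by_cases hab : a = b
  · subst hab
    simp [destutter_cons']
  · simp [destutter_cons', hab]

theorem destutter_ne_replicate_append (a : α) (k : ℕ) (l : List α) :
    (replicate (k + 1) a ++ l).destutter (· ≠ ·) = (a :: l).destutter (· ≠ ·) := by
  induction k with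
  | zero => rfl
  | succ k ih =>
    rw [replicate_succ, cons_append, ← ih, replicate_succ, cons_append, destutter_ne_cons_cons,
      if_pos rfl]

theorem destutter_ne_cons_of_forall_mem_head? {a : α} {l : List α} (h : ∀ b ∈ l.head?, a ≠ b) :
    (a :: l).destutter (· ≠ ·) = a :: l.destutter (· ≠ ·) := by
  cases l with
  | nil => rfl
  | cons b l => rw [destutter_ne_cons_cons, if_neg (h b rfl)]

theorem destutter_ne_flatMap_replicate (l : List β) (f : β → α) (m : β → ℕ)
    (hm : ∀ x ∈ l, 0 < m x) (hl : l.IsChain fun x y => f x ≠ f y) :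
    (l.flatMap fun x => replicate (m x) (f x)).destutter (· ≠ ·) = l.map f := by
  induction l with
  | nil => rfl
  | cons x l ih =>
    obtain ⟨k, hk⟩ := Nat.exists_eq_add_one_of_ne_zero (hm x mem_cons_self).ne'
    have hhead : ∀ b ∈ (l.flatMap fun x => replicate (m x) (f x)).head?, f x ≠ b := by
      cases l with
      | nil => simp
      | cons y l =>
        obtain ⟨j, hj⟩ := Nat.exists_eq_add_one_of_ne_zero (hm y (by simp)).ne'
        simpa [hj, replicate_succ] using (isChain_cons_cons.1 hl).1
    rw [flatMap_cons, hk, destutter_ne_replicate_append,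
      destutter_ne_cons_of_forall_mem_head? hhead,
      ih (fun y hy => hm y (mem_cons_of_mem x hy)) hl.tail, map_cons]

theorem length_destutter_ne_map_le_countP (l : List β) (f : β → α) (p : β → Bool)
    (hl : l.IsChain fun x y => f x ≠ f y → p x) (hlast : ∀ x ∈ l.getLast?, p x) :
    ((l.map f).destutter (· ≠ ·)).length ≤ l.countP p := by
  induction l with
  | nil => simp
  | cons x l ih =>
    cases l with
    | nil => simp [hlast x rfl]
    | cons y l =>
      have ih' := ih hl.tail (by simpa using hlast)
      rw [map_cons] at ih'
      rw [map_cons, map_cons, destutter_ne_cons_cons, countP_cons]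
      by_cases hxy : f x = f y
      · rw [if_pos hxy]
        split_ifs <;> omega
      · rw [if_neg hxy, length_cons, if_pos ((isChain_cons_cons.1 hl).1 hxy)]
        omega

end List

namespace HNNExtension

variable {G : Type*} [Group G] {A B : Subgroup G} (φ : A ≃* B)

theorem t_zpow_mul_of (u : ℤˣ) (g : G) (hg : g ∈ toSubgroup A B u) :
    (t ^ (u : ℤ) : HNNExtension G A B φ) * of g
      = of (toSubgroupEquiv φ u ⟨g, hg⟩ : G) * t ^ (u : ℤ) := by
  rcases Int.units_eq_one_or u with rfl | rfl
  · simp only [Units.val_one, zpow_one]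
    exact t_mul_of (φ := φ) ⟨g, hg⟩
  · simp only [Units.val_neg, Units.val_one, zpow_neg, zpow_one]
    exact inv_t_mul_of (φ := φ) ⟨g, hg⟩

namespace NormalWord.ReducedWord

theorem prod_mk (head : G) (l : List (ℤˣ × G)) (chain) :
    (ReducedWord.mk head l chain).prod φ
      = of head * (l.map fun x => t ^ (x.1 : ℤ) * of x.2).prod := rfl

theorem forall_mem_getLast?_ne_one_of_prod_eq {w w' : ReducedWord G A B}
    (h : w.prod φ = w'.prod φ) (hw' : ∀ x ∈ w'.toList.getLast?, x.2 ∉ toSubgroup A B x.1) :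
    ∀ x ∈ w.toList.getLast?, x.2 ≠ 1 := by
  rintro ⟨v, g⟩ hx rfl
  obtain ⟨l, hl⟩ := List.getLast?_eq_some_iff.1 hx
  let w₁ : ReducedWord G A B := ⟨w.head, l, (hl ▸ w.chain).left_of_append⟩
  let w₂ : ReducedWord G A B := ⟨w'.head, w'.toList ++ [(-v, 1)],
    w'.chain.append (List.isChain_singleton _) fun x hx _ _ hmem => (hw' x hx hmem).elim⟩
  -- Both `w₁` and `w₂` spell `w.prod φ * t ^ (-v)`, but `w₂` has two more letters.
  have h₁ : w₁.prod φ * t ^ (v : ℤ) = w.prod φ := by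
    simp [ReducedWord.prod, w₁, hl, mul_assoc]
  have h₂ : w₂.prod φ * t ^ (v : ℤ) = w'.prod φ := by
    simp [ReducedWord.prod, w₂, mul_assoc]
  have h₁₂ : w₁.prod φ = w₂.prod φ := mul_right_cancel (h₁.trans (h.trans h₂.symm))
  have hlen := congrArg List.length (ReducedWord.map_fst_eq_and_of_prod_eq φ h).1
  have hlen₁₂ :=
    congrArg List.length (ReducedWord.map_fst_eq_and_of_prod_eq φ h₁₂).1
  simp only [List.length_map, List.length_append, hl, w₁, w₂, List.length_singleton] at hlen hlen₁₂
  omega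

variable [DecidableEq G]

/-- The length of the spelling of `w` letter by letter: `t ^ u * g` costs two generators,
one if `g = 1`. -/
def cost (w : ReducedWord G A B) : ℕ :=
  (if w.head = 1 then 0 else 1) + w.toList.length + w.toList.countP (·.2 ≠ 1)

theorem exists_prod_eq_of_mul_cost_le (g : G) (w : ReducedWord G A B) :
    ∃ w' : ReducedWord G A B, w'.prod φ = of g * w.prod φ ∧ w'.cost ≤ w.cost + 1 := by
  refine ⟨⟨g * w.head, w.toList, w.chain⟩, by rw [prod_mk, map_mul, mul_assoc]; rfl, ?_⟩
  simp only [cost]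
  split_ifs <;> omega

theorem exists_prod_eq_t_zpow_mul_cost_le (u : ℤˣ) (w : ReducedWord G A B) :
    ∃ w' : ReducedWord G A B, w'.prod φ = t ^ (u : ℤ) * w.prod φ ∧ w'.cost ≤ w.cost + 1 := by
  rcases w with ⟨head, l, chain⟩
  by_cases hcancel : ∃ (hmem : head ∈ toSubgroup A B u) (g : G) (l' : List (ℤˣ × G)),
    l = (-u, g) :: l'
  · obtain ⟨hmem, g, l', rfl⟩ := hcancel
    refine ⟨⟨toSubgroupEquiv φ u ⟨head, hmem⟩ * g, l', (List.isChain_cons.1 chain).2⟩, ?_, ?_⟩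
    · rw [prod_mk, prod_mk, List.map_cons, List.prod_cons, ← mul_assoc, ← mul_assoc,
        t_zpow_mul_of φ u head hmem, mul_assoc _ (t ^ _), ← mul_assoc (t ^ _),
        Units.val_neg, zpow_neg, mul_inv_cancel, one_mul, map_mul, mul_assoc]
    · simp only [cost, List.length_cons, List.countP_cons]
      split_ifs <;> omega
  · refine ⟨⟨1, (u, head) :: l, List.isChain_cons.2 ⟨?_, chain⟩⟩, ?_, ?_⟩
    · rintro ⟨v, g⟩ hy hmem
      obtain ⟨l', rfl⟩ : ∃ l', l = (v, g) :: l' := ⟨l.tail, List.eq_cons_of_mem_head? hy⟩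
      rcases Int.units_eq_one_or u with rfl | rfl <;>
        rcases Int.units_eq_one_or v with rfl | rfl <;> simp_all
    · simp [prod_mk, mul_assoc]
    · simp only [cost, List.length_cons, List.countP_cons, decide_eq_true_eq]
      split_ifs <;> omega

theorem exists_prod_eq_cost_le (l : List (HNNExtension G A B φ))
    (hl : ∀ x ∈ l, x ∈ hnnGenSet A B φ) :
    ∃ w : ReducedWord G A B, w.prod φ = l.prod ∧ w.cost ≤ l.length := by
  induction l with
  | nil => exact ⟨ReducedWord.empty G A B, by simp [ReducedWord.prod], by simp [cost]⟩
  | cons x l ih =>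
    obtain ⟨w, hw, hcost⟩ := ih fun y hy => hl y (List.mem_cons_of_mem x hy)
    obtain ⟨w', hw', hcost'⟩ : ∃ w' : ReducedWord G A B, w'.prod φ = x * w.prod φ ∧
        w'.cost ≤ w.cost + 1 := by
      rcases hl x List.mem_cons_self with (rfl | rfl) | ⟨g, -, rfl⟩
      · simpa using exists_prod_eq_t_zpow_mul_cost_le φ 1 w
      · simpa using exists_prod_eq_t_zpow_mul_cost_le φ (-1) w
      · exact exists_prod_eq_of_mul_cost_le φ g w
    exact ⟨w', by rw [hw', hw, List.prod_cons], by simp only [List.length_cons]; omega⟩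

theorem length_add_length_destutter_le_cost (w : ReducedWord G A B)
    (hlast : ∀ x ∈ w.toList.getLast?, x.2 ≠ 1) :
    w.toList.length + ((w.toList.map Prod.fst).destutter (· ≠ ·)).length ≤ w.cost := by
  have hruns := w.toList.length_destutter_ne_map_le_countP Prod.fst (·.2 ≠ 1)
    (w.chain.imp fun x y hxy hne => by
      simpa using fun h1 : x.2 = 1 => hne (hxy (h1 ▸ one_mem _)))
    (by simpa using hlast)
  simp only [cost]
  omega

end NormalWord.ReducedWord

open NormalWord

theorem hnnWordLength_prod_eq_length_of_le_cost [DecidableEq G]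
    (l₀ : List (HNNExtension G A B φ)) (hl₀ : ∀ x ∈ l₀, x ∈ hnnGenSet A B φ)
    (hcost : ∀ w : ReducedWord G A B, w.prod φ = l₀.prod → l₀.length ≤ w.cost) :
    hnnWordLength A B φ l₀.prod = l₀.length := by
  refine le_antisymm (Nat.sInf_le ⟨l₀, hl₀, rfl, rfl⟩) (le_csInf ⟨_, l₀, hl₀, rfl, rfl⟩ ?_)
  rintro _ ⟨l, hl, hprod, rfl⟩
  obtain ⟨w, hw, hw_cost⟩ := ReducedWord.exists_prod_eq_cost_le φ l hl
  exact (hcost w (hw.trans hprod)).trans hw_cost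

/-- The letters of the reduced word `t ^ (u * m) * of a`, for `b = (u, m, a)` with `0 < m`. -/
def blockLetters (b : ℤˣ × ℕ × G) : List (ℤˣ × G) :=
  List.replicate (b.2.1 - 1) (b.1, 1) ++ [(b.1, b.2.2)]

theorem map_fst_blockLetters {b : ℤˣ × ℕ × G} (hb : 0 < b.2.1) :
    (blockLetters b).map Prod.fst = List.replicate b.2.1 b.1 := by
  obtain ⟨u, m, a⟩ := b
  obtain ⟨k, rfl⟩ := Nat.exists_eq_add_one_of_ne_zero hb.ne'
  simp [blockLetters, List.replicate_succ']

theorem prod_map_blockLetters {b : ℤˣ × ℕ × G} (hb : 0 < b.2.1) :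
    ((blockLetters b).map fun x => (t ^ (x.1 : ℤ) * of x.2 : HNNExtension G A B φ)).prod
      = t ^ ((b.1 : ℤ) * b.2.1) * of b.2.2 := by
  obtain ⟨u, m, a⟩ := b
  obtain ⟨k, rfl⟩ := Nat.exists_eq_add_one_of_ne_zero hb.ne'
  simp [blockLetters, ← zpow_natCast, ← zpow_mul, ← mul_assoc, ← zpow_add, mul_add]

theorem isChain_flatMap_blockLetters {bs : List (ℤˣ × ℕ × G)}
    (hbs : ∀ b ∈ bs, b.2.2 ∉ toSubgroup A B b.1) :
    (bs.flatMap blockLetters).IsChain fun x y => x.2 ∈ toSubgroup A B x.1 → x.1 = y.1 := by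
  induction bs with
  | nil => exact List.isChain_nil
  | cons b bs ih =>
    refine (List.IsChain.append ?_ (ih fun c hc => hbs c (List.mem_cons_of_mem b hc)) ?_)
    · refine (List.isChain_replicate_of_rel _ fun _ => rfl).append (List.isChain_singleton _) ?_
      intro x hx y hy _
      rw [List.eq_of_mem_replicate (List.mem_of_mem_getLast? hx), ← Option.mem_some_iff.1 hy]
    · intro x hx _ _ hmem
      simp only [blockLetters, List.getLast?_append, List.getLast?_singleton, Option.some_or,
        Option.mem_some_iff] at hx
      subst hx
      exact (hbs b List.mem_cons_self hmem).elim

theorem sum_add_length_le_cost_of_prod_eq [DecidableEq G] {bs : List (ℤˣ × ℕ × G)}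
    (hm : ∀ b ∈ bs, 0 < b.2.1) (hsub : ∀ b ∈ bs, b.2.2 ∉ toSubgroup A B b.1)
    (halt : bs.IsChain fun b c => b.1 ≠ c.1) {w : ReducedWord G A B}
    (hw : w.prod φ = (bs.map fun b => t ^ ((b.1 : ℤ) * b.2.1) * of b.2.2).prod) :
    (bs.map fun b => b.2.1).sum + bs.length ≤ w.cost := by
  let w₀ : ReducedWord G A B := ⟨1, bs.flatMap blockLetters, isChain_flatMap_blockLetters hsub⟩
  have hw₀ : w.prod φ = w₀.prod φ := by
    refine hw.trans (Eq.symm ?_)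
    simp only [ReducedWord.prod, w₀, map_one, one_mul, List.flatMap_def, List.map_flatten,
      List.prod_flatten, List.map_map]
    exact congrArg List.prod (List.map_congr_left fun b hb => prod_map_blockLetters φ (hm b hb))
  have hfst : w.toList.map Prod.fst = bs.flatMap fun b => List.replicate b.2.1 b.1 := by
    rw [(ReducedWord.map_fst_eq_and_of_prod_eq φ hw₀).1, List.map_flatMap]
    exact List.flatMap_congr fun b hb => map_fst_blockLetters (hm b hb)
  have hlast₀ : ∀ x ∈ w₀.toList.getLast?, x.2 ∉ toSubgroup A B x.1 := by
    intro x hx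
    obtain ⟨b, hb, hbx⟩ := List.exists_of_findSome?_eq_some (List.getLast?_flatMap ▸ hx)
    simp only [blockLetters, List.getLast?_append, List.getLast?_singleton, Option.some_or,
      Option.some_inj] at hbx
    exact hbx ▸ hsub b (List.mem_reverse.1 hb)
  have hcost := w.length_add_length_destutter_le_cost
    (ReducedWord.forall_mem_getLast?_ne_one_of_prod_eq φ hw₀ hlast₀)
  rw [hfst, List.destutter_ne_flatMap_replicate bs Prod.fst (·.2.1) hm halt,
    List.length_map] at hcost
  have hlen := congrArg List.length hfst
  simp only [List.length_map, List.length_flatMap, List.length_replicate] at hlen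
  omega

theorem hnnWordLength_prod_t_zpow_mul_of_alternating (bs : List (ℤˣ × ℕ × G))
    (hm : ∀ b ∈ bs, 0 < b.2.1) (hsub : ∀ b ∈ bs, b.2.2 ∉ toSubgroup A B b.1)
    (halt : bs.IsChain fun b c => b.1 ≠ c.1) :
    hnnWordLength A B φ (bs.map fun b => t ^ ((b.1 : ℤ) * b.2.1) * of b.2.2).prod
      = (bs.map fun b => b.2.1).sum + bs.length := by
  classical
  let l₀ : List (HNNExtension G A B φ) :=
    bs.flatMap fun b => List.replicate b.2.1 (t ^ (b.1 : ℤ)) ++ [of b.2.2]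
  have hl₀ : ∀ x ∈ l₀, x ∈ hnnGenSet A B φ := by
    simp only [l₀, List.mem_flatMap, List.mem_append, List.mem_replicate, List.mem_singleton]
    rintro x ⟨b, hb, ⟨-, rfl⟩ | rfl⟩
    · rcases Int.units_eq_one_or b.1 with h | h <;> simp [hnnGenSet, h]
    · exact Or.inr ⟨b.2.2, fun h => hsub b hb (h ▸ one_mem _), rfl⟩
  have hprod : l₀.prod = (bs.map fun b => t ^ ((b.1 : ℤ) * b.2.1) * of b.2.2).prod := by
    simp only [l₀, List.flatMap_def, List.prod_flatten, List.map_map]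
    refine congrArg List.prod (List.map_congr_left fun b _ => ?_)
    simp [← zpow_natCast, ← zpow_mul]
  have hlen : l₀.length = (bs.map fun b => b.2.1).sum + bs.length := by
    simp [l₀, List.length_flatMap, List.sum_map_add]
  rw [← hprod, ← hlen]
  exact hnnWordLength_prod_eq_length_of_le_cost φ l₀ hl₀ fun w hw =>
    hlen ▸ sum_add_length_le_cost_of_prod_eq φ hm hsub halt (hw.trans hprod)

end HNNExtension

theorem alternating_word_is_geodesic_general {H : Type*} [Group H]
    (C C' : Subgroup H) (φ : C ≃* C')
    (I : ℕ) (n : Fin I → ℤ) (a : Fin I → H)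
    (halt : ∀ i : Fin I,
      (Even (i : ℕ) → 0 < n i ∧ a i ∉ C) ∧
      (Odd (i : ℕ) → n i < 0 ∧ a i ∉ C')) :
    hnnWordLength C C' φ
        (((List.finRange I).map
          (fun i => HNNExtension.t ^ (n i) * HNNExtension.of (a i))).prod) =
      (∑ i : Fin I, (n i).natAbs) + I := by
  have hblock : ∀ i : Fin I, 0 < (n i).natAbs ∧
      (((-1 : ℤˣ) ^ (i : ℕ) : ℤˣ) : ℤ) * (n i).natAbs = n i ∧
      a i ∉ HNNExtension.toSubgroup C C' ((-1) ^ (i : ℕ)) := by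
    intro i
    rcases Nat.even_or_odd (i : ℕ) with h | h
    · obtain ⟨hn, ha⟩ := (halt i).1 h
      simp [h.neg_one_pow, hn.ne', ha, abs_of_pos hn]
    · obtain ⟨hn, ha⟩ := (halt i).2 h
      simp [h.neg_one_pow, hn.ne, ha, abs_of_neg hn]
  set bs := (List.finRange I).map fun i : Fin I => ((-1 : ℤˣ) ^ (i : ℕ), (n i).natAbs, a i)
  have hsigns : bs.IsChain fun b c => b.1 ≠ c.1 := by
    rw [List.isChain_map, List.isChain_iff_getElem]
    intro k hk
    simp [pow_succ]
  have key := HNNExtension.hnnWordLength_prod_t_zpow_mul_of_alternating φ bs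
    (by simpa [bs] using fun i => (hblock i).1) (by simpa [bs] using fun i => (hblock i).2.2)
    hsigns
  simp only [bs, List.map_map, Function.comp_def, fun i => (hblock i).2.1, List.length_map,
    List.length_finRange] at key
  rwa [Fin.sum_univ_def]

/-- In the HNN extension `G = H*_C φ` (relation `t c t⁻¹ = φ c`, `C' = φ(C)`) with
`|H/C| ≥ 2` and `|H/C'| ≥ 2`, a word `w = t^{n₁} a₁ t^{n₂} a₂ ⋯ t^{n_I} a_I` with
`aᵢ ∈ H \ {1}`, `n₁, n₃, … > 0`, `n₂, n₄, … < 0`, `a₁, a₃, … ∉ C` and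
`a₂, a₄, … ∉ C' = φ(C)` is geodesic: the word length of the element it represents
equals `Σᵢ |nᵢ| + I`. -/
theorem alternating_word_is_geodesic {H : Type*} [Group H]
    (C C' : Subgroup H) (φ : C ≃* C')
    (hC : ∃ x : H, x ∉ C) (hC' : ∃ y : H, y ∉ C')
    (I : ℕ) (n : Fin I → ℤ) (a : Fin I → H) (ha : ∀ i, a i ≠ 1)
    (halt : ∀ i : Fin I,
      (Even (i : ℕ) → 0 < n i ∧ a i ∉ C) ∧
      (Odd (i : ℕ) → n i < 0 ∧ a i ∉ C')) :
    hnnWordLength C C' φ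
        (((List.finRange I).map
          (fun i => HNNExtension.t ^ (n i) * HNNExtension.of (a i))).prod) =
      (∑ i : Fin I, (n i).natAbs) + I :=
  alternating_word_is_geodesic_general C C' φ I n a halt
end
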